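/- (Brunel's admissibility criterion.) Let K be an n×n complex matrix. There exists a determinantal point process with marginal kernel K if and only if for every finset J of Fin n, the complex number (−1)^{|J|} · det(K − 𝟙_J) is a nonnegative real number. -/

import Mathlib

open Matrix

/-- The submatrix of `K` with rows indexed by `A` and columns indexed by `B`. -/
def kSub {n : ℕ} (K : Matrix (Fin n) (Fin n) ℂ) (A B : Finset (Fin n)) :
    Matrix A B ℂ :=
  Matrix.of fun i j => K i j

/-- `p` is a determinantal point process with marginal kernel `K`:
`p` is a probability mass function on finsets of `Fin n` and for every finset `Y`
the probability that `Y` is contained in the sample equals `det (K_Y)`. -/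
def IsDPP {n : ℕ} (K : Matrix (Fin n) (Fin n) ℂ) (p : Finset (Fin n) → ℝ) : Prop :=
  (∀ S, 0 ≤ p S) ∧ (∑ S : Finset (Fin n), p S = 1) ∧
    ∀ Y : Finset (Fin n),
      ((∑ S ∈ Finset.univ.filter fun S => Y ⊆ S, p S : ℝ) : ℂ) =
        (kSub K Y Y).det


/-- The diagonal 0/1 indicator matrix of a finset `J`. -/
def indMat {n : ℕ} (J : Finset (Fin n)) : Matrix (Fin n) (Fin n) ℂ :=
  Matrix.diagonal fun i => if i ∈ J then 1 else 0

/-!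
The marginal condition says that the superset sums of `p` are the principal minors `det K_Y`, so by
Möbius inversion on the Boolean lattice `p S = ∑_{Y ⊇ S} (-1)^|Y \ S| det K_Y`. Expanding
`det (K - 𝟙_J)` by multilinearity in the rows identifies this alternating sum at `S = Jᶜ` with
`(-1)^|J| det (K - 𝟙_J)`. Conversely, when these numbers are nonnegative they define `p`, whose
superset sums are the minors by the inverse Möbius formula; total mass one is the case `Y = ∅`.
-/

open Finset

section BooleanMoebius

variable {α R : Type*} [DecidableEq α]

lemma neg_one_pow_card_sdiff_mul_neg_one_pow_card_sdiff [Monoid R] [HasDistribNeg R]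
    {X Y S : Finset α} (hXY : X ⊆ Y) (hYS : Y ⊆ S) :
    (-1 : R) ^ #(S \ Y) * (-1) ^ #(Y \ X) = (-1) ^ #(S \ X) := by
  rw [← pow_add, ← sdiff_union_sdiff_cancel hYS hXY,
    card_union_of_disjoint (sdiff_disjoint.mono_right sdiff_subset)]

lemma sum_Icc_neg_one_pow_card_sdiff_left [Ring R] (X S : Finset α) :
    ∑ Y ∈ Icc X S, (-1 : R) ^ #(Y \ X) = if X = S then 1 else 0 := by
  by_cases hXS : X ⊆ S
  · have hdisj : ∀ U ∈ (S \ X).powerset, Disjoint X U := fun U hU =>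
      disjoint_sdiff.mono_right (mem_powerset.1 hU)
    rw [Icc_eq_image_powerset hXS, sum_image fun U hU V hV h => by
      rw [← union_sdiff_cancel_left (hdisj U hU), h, union_sdiff_cancel_left (hdisj V hV)]]
    rw [sum_congr rfl fun U hU => by rw [union_sdiff_cancel_left (hdisj U hU)]]
    have hpowerset := congrArg (Int.cast : ℤ → R) (sum_powerset_neg_one_pow_card (x := S \ X))
    push_cast at hpowerset
    rw [hpowerset]
    exact if_congr (sdiff_eq_empty_iff_subset.trans ⟨hXS.antisymm, fun h => h ▸ subset_rfl⟩)
      rfl rfl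
  · rw [Icc_eq_empty (by simpa using hXS), sum_empty, if_neg (by rintro rfl; exact hXS subset_rfl)]

lemma sum_Icc_neg_one_pow_card_sdiff_right [Ring R] (X S : Finset α) :
    ∑ Y ∈ Icc X S, (-1 : R) ^ #(S \ Y) = if X = S then 1 else 0 := by
  have key : ∀ Y ∈ Icc X S, (-1 : R) ^ #(S \ Y) = (-1) ^ #(S \ X) * (-1) ^ #(Y \ X) :=
    fun Y hY => by
      obtain ⟨hXY, hYS⟩ := mem_Icc.1 hY
      rw [← neg_one_pow_card_sdiff_mul_neg_one_pow_card_sdiff hXY hYS, mul_assoc,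
        pow_mul_pow_eq_one _ (by simp), mul_one]
  rw [sum_congr rfl key, ← mul_sum, sum_Icc_neg_one_pow_card_sdiff_left]
  split_ifs with h <;> simp [h]

variable [Fintype α]

def sumSupersets [AddCommMonoid R] (f : Finset α → R) (X : Finset α) : R :=
  ∑ S ∈ univ.filter (X ⊆ ·), f S

def moebiusSupersets [Ring R] (f : Finset α → R) (X : Finset α) : R :=
  ∑ S ∈ univ.filter (X ⊆ ·), (-1) ^ #(S \ X) * f S

lemma sum_supersets_sum_supersets [AddCommMonoid R] (g : Finset α → Finset α → R)
    (X : Finset α) :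
    ∑ Y ∈ univ.filter (X ⊆ ·), ∑ S ∈ univ.filter (Y ⊆ ·), g Y S =
      ∑ S ∈ univ.filter (X ⊆ ·), ∑ Y ∈ Icc X S, g Y S :=
  sum_comm' fun Y S => by
    simp only [mem_filter, mem_univ, true_and, mem_Icc]
    exact ⟨fun h => ⟨⟨h.1, h.2⟩, h.1.trans h.2⟩, fun h => h.1⟩

theorem moebiusSupersets_sumSupersets [Ring R] (f : Finset α → R) :
    moebiusSupersets (sumSupersets f) = f := by
  ext X
  simp only [moebiusSupersets, sumSupersets, mul_sum, sum_supersets_sum_supersets, ← sum_mul,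
    sum_Icc_neg_one_pow_card_sdiff_left, ite_mul, one_mul, zero_mul]
  simp

theorem sumSupersets_moebiusSupersets [Ring R] (f : Finset α → R) :
    sumSupersets (moebiusSupersets f) = f := by
  ext X
  simp only [moebiusSupersets, sumSupersets, sum_supersets_sum_supersets, ← sum_mul,
    sum_Icc_neg_one_pow_card_sdiff_right, ite_mul, one_mul, zero_mul]
  simp

end BooleanMoebius

section DeterminantExpansion

variable {n R : Type*} [Fintype n] [DecidableEq n] [CommRing R]

theorem det_add_diagonal (M : Matrix n n R) (d : n → R) :
    det (M + diagonal d) =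
      ∑ s : Finset n, (∏ i ∈ sᶜ, d i) * (M.submatrix (↑) (↑) : Matrix s s R).det := by
  rw [det, show M + diagonal d = M.row + (diagonal d).row from rfl, AlternatingMap.map_add_univ]
  refine sum_congr rfl fun s _ => ?_
  have hrows : s.piecewise M.row (diagonal d).row = of fun i j =>
      (if i ∈ s then 1 else d i) * of (s.piecewise M.row (1 : Matrix n n R).row) i j := by
    ext i j
    by_cases hi : i ∈ s <;> simp [Finset.piecewise, hi, Matrix.row, diagonal_apply, one_apply]
  rw [hrows, ← det, det_mul_column, det_piecewise_one_eq_submatrix_det]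
  simp only [← Fintype.prod_ite_mem sᶜ d, mem_compl, ite_not]

end DeterminantExpansion

lemma prod_neg_boole_mem {α R : Type*} [DecidableEq α] [CommRing R] (t J : Finset α) :
    ∏ i ∈ t, -(if i ∈ J then 1 else 0 : R) = if t ⊆ J then (-1) ^ #t else 0 := by
  by_cases h : t ⊆ J
  · rw [if_pos h, prod_neg, prod_boole, if_pos fun i hi => h hi, mul_one]
  · obtain ⟨i, hit, hiJ⟩ := not_subset.1 h
    rw [if_neg h]
    exact prod_eq_zero hit (by simp [hiJ])

theorem neg_one_pow_card_mul_det_sub_indMat {n : ℕ} (K : Matrix (Fin n) (Fin n) ℂ)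
    (J : Finset (Fin n)) :
    (-1) ^ #J * (K - indMat J).det = moebiusSupersets (fun Y => (kSub K Y Y).det) Jᶜ := by
  rw [indMat, sub_eq_add_neg, diagonal_neg, det_add_diagonal, mul_sum, moebiusSupersets,
    sum_filter]
  refine sum_congr rfl fun s _ => ?_
  rw [prod_neg_boole_mem]
  by_cases hJs : Jᶜ ⊆ s
  · rw [if_pos (compl_le_iff_compl_le.1 hJs), if_pos hJs]
    have hsign : (-1 : ℂ) ^ #J = (-1) ^ #sᶜ * (-1) ^ #(s \ Jᶜ) := by
      simpa [← compl_eq_univ_sdiff] using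
        (neg_one_pow_card_sdiff_mul_neg_one_pow_card_sdiff hJs (subset_univ s)).symm
    rw [hsign, mul_comm ((-1 : ℂ) ^ #sᶜ), mul_assoc, ← mul_assoc ((-1 : ℂ) ^ #sᶜ),
      pow_mul_pow_eq_one _ (by simp), one_mul]
    rfl
  · rw [if_neg (mt compl_le_iff_compl_le.1 hJs), if_neg hJs, zero_mul, mul_zero]

theorem stmt_13 {n : ℕ} (K : Matrix (Fin n) (Fin n) ℂ) :
    (∃ p : Finset (Fin n) → ℝ, IsDPP K p) ↔
      ∀ J : Finset (Fin n),
        ∃ r : ℝ, 0 ≤ r ∧ (-1 : ℂ) ^ J.card * (K - indMat J).det = r := by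
  constructor
  · rintro ⟨p, hp_nonneg, -, hp_marg⟩ J
    have hminors : (fun Y => (kSub K Y Y).det) = sumSupersets (fun S => (p S : ℂ)) :=
      funext fun Y => by rw [← hp_marg, sumSupersets, Complex.ofReal_sum]
    refine ⟨p Jᶜ, hp_nonneg _, ?_⟩
    rw [neg_one_pow_card_mul_det_sub_indMat, hminors, moebiusSupersets_sumSupersets]
  · intro h
    choose r hr_nonneg hr using h
    have hmoebius : (fun S => (r Sᶜ : ℂ)) = moebiusSupersets (fun Y => (kSub K Y Y).det) :=
      funext fun S => by rw [← hr, neg_one_pow_card_mul_det_sub_indMat, compl_compl]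
    have hmarg : ∀ Y,
        ((∑ S ∈ univ.filter (Y ⊆ ·), r Sᶜ : ℝ) : ℂ) = (kSub K Y Y).det := by
      intro Y
      rw [Complex.ofReal_sum, ← sumSupersets, hmoebius, sumSupersets_moebiusSupersets]
    refine ⟨fun S => r Sᶜ, fun S => hr_nonneg _, ?_, hmarg⟩
    exact_mod_cast (by simpa using hmarg ∅ : ∑ S : Finset (Fin n), (r Sᶜ : ℂ) = 1)
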